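/- Let G be a group with finite generating set X that is a limit of hyperbolic groups. Then: (a) for every k ∈ ℕ there exists M = M(k) ∈ ℕ such that f_{G,X}(k,m,n) ≤ 400·⌈n/m⌉ for all m ≥ M and all n ∈ ℕ; (b) if, moreover, G is well-approximated by hyperbolic groups, then f_{G,X}(k,m,n) ∼ n/m. -/

import Mathlib

open Function

namespace IsoSpecPaper

variable {ι : Type*} {G : Type*} [Group G]

/-- The (reduced) length of an element of a free group. -/
noncomputable def wnorm (w : FreeGroup ι) : ℕ :=
  @FreeGroup.norm ι (Classical.decEq ι) w

/-- `triv φ k` : the set of words of length at most `k` in the generators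
(and their inverses) representing the identity of `G` under the marking `φ`. -/
noncomputable def triv (φ : FreeGroup ι →* G) (k : ℕ) : Set (FreeGroup ι) :=
  {w | wnorm w ≤ k ∧ φ w = 1}

/-- `AreaLe R w l` : `w` is a product of `l` conjugates of elements of `R` or
their inverses in the free group. -/
def AreaLe (R : Set (FreeGroup ι)) (w : FreeGroup ι) (l : ℕ) : Prop :=
  ∃ L : List (FreeGroup ι × FreeGroup ι), L.length = l ∧
    (∀ p ∈ L, p.2 ∈ R ∨ p.2⁻¹ ∈ R) ∧
    w = (L.map fun p => p.1⁻¹ * p.2 * p.1).prod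

/-- The area of `w` with respect to the set of relators `R`. -/
noncomputable def area (R : Set (FreeGroup ι)) (w : FreeGroup ι) : ℕ :=
  sInf {l | AreaLe R w l}

/-- The isoperimetric spectrum of the marked group `(G, φ)`:
`isoSpec φ k m n = max { area_{S_m}(w) : w ∈ ⟪S_k⟫, ‖w‖ ≤ n }`. -/
noncomputable def isoSpec (φ : FreeGroup ι →* G) (k m n : ℕ) : ℕ :=
  sSup (area (triv φ m) '' {w | w ∈ Subgroup.normalClosure (triv φ k) ∧ wnorm w ≤ n})

/-- The real-valued isoperimetric spectrum. -/
noncomputable def isoSpecR (φ : FreeGroup ι →* G) : ℕ → ℕ → ℕ → ℝ :=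
  fun k m n => (isoSpec φ k m n : ℝ)

/-- The Dehn function of the presentation with relators `R`. -/
noncomputable def dehn (R : Set (FreeGroup ι)) (n : ℕ) : ℕ :=
  sSup (area R '' {w | w ∈ Subgroup.normalClosure R ∧ wnorm w ≤ n})

/-- The quasi-order `f ≼ g` on functions of triples `(k,m,n)` of positive integers
with `m ≥ k`. -/
def SpecLE (f g : ℕ → ℕ → ℕ → ℝ) : Prop :=
  ∃ C : ℕ, 0 < C ∧ ∀ k m n : ℕ, 0 < k → 0 < m → 0 < n → C * k ≤ m →
    f k (C * m) n ≤ C * g (C * k) m (C * n) + C * (n : ℝ) / m + C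

/-- Equivalence of isoperimetric functions: `f ∼ g`. -/
def SpecEquiv (f g : ℕ → ℕ → ℕ → ℝ) : Prop := SpecLE f g ∧ SpecLE g f

/-- The linear spectrum `(k,m,n) ↦ n/m`. -/
noncomputable def linSpec : ℕ → ℕ → ℕ → ℝ := fun _ m n => (n : ℝ) / m

/-- The word length of `g ∈ G` with respect to the marking `φ`. -/
noncomputable def wlen (φ : FreeGroup ι →* G) (g : G) : ℕ :=
  sInf {n | ∃ w : FreeGroup ι, wnorm w = n ∧ φ w = g}

/-- The word metric on `G` with respect to the marking `φ`. -/
noncomputable def wdist (φ : FreeGroup ι →* G) (g h : G) : ℕ := wlen φ (g⁻¹ * h)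

/-- Quasi-isometry of marked groups with respect to their word metrics. -/
noncomputable def QuasiIsometric {H : Type*} [Group H] {κ : Type*}
    (φ : FreeGroup ι →* G) (ψ : FreeGroup κ →* H) : Prop :=
  ∃ L : ℝ, 0 ≤ L ∧ ∃ (α : G → H) (β : H → G),
    (∀ x y : G, (wdist ψ (α x) (α y) : ℝ) ≤ L * wdist φ x y + L) ∧
    (∀ u v : H, (wdist φ (β u) (β v) : ℝ) ≤ L * wdist ψ u v + L) ∧
    (∀ t : H, (wdist ψ (α (β t)) t : ℝ) ≤ L) ∧
    (∀ s : G, (wdist φ (β (α s)) s : ℝ) ≤ L)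

/-- A (combinatorial) geodesic path of length `n` in the Cayley graph of `(G, φ)`:
consecutive vertices are at distance at most `1` and the endpoints are at
distance exactly `n`. -/
noncomputable def IsGeodesic (φ : FreeGroup ι →* G) {n : ℕ} (p : Fin (n + 1) → G) : Prop :=
  (∀ i : Fin n, wdist φ (p i.castSucc) (p i.succ) ≤ 1) ∧
  wdist φ (p 0) (p (Fin.last n)) = n

/-- Every vertex of the path `p` lies within distance `δ` of the set `A`. -/
noncomputable def ThinAt (φ : FreeGroup ι →* G) (δ : ℝ) {n : ℕ}
    (p : Fin (n + 1) → G) (A : Set G) : Prop :=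
  ∀ i, ∃ a ∈ A, (wdist φ (p i) a : ℝ) ≤ δ

/-- The Cayley graph of `(G, φ)` is `δ`-hyperbolic: every geodesic triangle is `δ`-thin. -/
noncomputable def HypConst (φ : FreeGroup ι →* G) (δ : ℝ) : Prop :=
  ∀ (n₁ n₂ n₃ : ℕ) (p : Fin (n₁ + 1) → G) (q : Fin (n₂ + 1) → G) (r : Fin (n₃ + 1) → G),
    IsGeodesic φ p → IsGeodesic φ q → IsGeodesic φ r →
    p (Fin.last n₁) = q 0 → q (Fin.last n₂) = r 0 → r (Fin.last n₃) = p 0 →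
    ThinAt φ δ p (Set.range q ∪ Set.range r) ∧
    ThinAt φ δ q (Set.range r ∪ Set.range p) ∧
    ThinAt φ δ r (Set.range p ∪ Set.range q)

/-- The marked group `(G, φ)` is hyperbolic. -/
noncomputable def IsHyperbolic (φ : FreeGroup ι →* G) : Prop :=
  ∃ δ : ℝ, 0 ≤ δ ∧ HypConst φ δ

/-- `G` (marked by `φ`) is a limit (direct limit) of hyperbolic groups. -/
noncomputable def LimitOfHyperbolic (φ : FreeGroup ι →* G) : Prop :=
  Surjective φ ∧ ∃ R : ℕ → Set (FreeGroup ι),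
    (∀ i j, i ≤ j → R i ⊆ R j) ∧
    φ.ker = Subgroup.normalClosure (⋃ i, R i) ∧
    ∀ i, IsHyperbolic (QuotientGroup.mk' (Subgroup.normalClosure (R i)))

/-- `G` (marked by `φ`) is well-approximated by hyperbolic groups. -/
noncomputable def WellApproximated (φ : FreeGroup ι →* G) : Prop :=
  Surjective φ ∧ ∃ R : ℕ → Set (FreeGroup ι),
    (∀ i j, i ≤ j → R i ⊆ R j) ∧
    φ.ker = Subgroup.normalClosure (⋃ i, R i) ∧
    (∀ i, IsHyperbolic (QuotientGroup.mk' (Subgroup.normalClosure (R i)))) ∧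
    ∃ C : ℕ, 0 < C ∧ ∀ i : ℕ, 0 < i →
      (∀ w : FreeGroup ι, wnorm w ≤ i → φ w = 1 →
        w ∈ Subgroup.normalClosure (R i)) ∧
      HypConst (QuotientGroup.mk' (Subgroup.normalClosure (R i))) ((C * i : ℕ) : ℝ)

/-!
Dehn's algorithm with explicit constants. In a `δ`-hyperbolic Cayley graph, a closed path of
length `N ≥ q > 4s + 6δ` has a window of length `≤ 2q` that is not `s`-quasi-geodesic:
otherwise the vertex farthest from the base point would lie `s`-almost between the vertices `q`
steps before and after it, hence close to a geodesic joining them, and thinness of the triangle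
with the base point would force it close to one of those two vertices. Replacing the window by a
geodesic costs one relator of length `≤ 4q` and shortens the word by `s + 1` letters. Taking
`s ≈ m/32` and `q ≈ m/4`, every null-homotopic word of length `n` has area `≤ 32 n/m + 1` over
the relators of length `≤ m`, once `m ≥ 48δ + 200`. For (a), the finitely many relations of
length `≤ k` already hold in one hyperbolic approximation `G_i`, whose constant gives `M(k)`;
for (b), `G_k` works with `δ = Ck`, and the bound `n/m ≼ f` is trivial.
-/

lemma wnorm_eq_norm [DecidableEq ι] (w : FreeGroup ι) : wnorm w = w.norm := by
  unfold wnorm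
  congr

@[simp] lemma wnorm_one : wnorm (1 : FreeGroup ι) = 0 := rfl

@[simp] lemma wnorm_inv (w : FreeGroup ι) : wnorm w⁻¹ = wnorm w := by
  classical
  simp only [wnorm_eq_norm, FreeGroup.norm_inv_eq]

lemma wnorm_mul_le (v w : FreeGroup ι) : wnorm (v * w) ≤ wnorm v + wnorm w := by
  classical
  simpa only [wnorm_eq_norm] using FreeGroup.norm_mul_le v w

lemma wnorm_mk_le (L : List (ι × Bool)) : wnorm (FreeGroup.mk L) ≤ L.length := by
  classical
  simpa only [wnorm_eq_norm] using FreeGroup.norm_mk_le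

lemma triv_finite [Finite ι] (φ : FreeGroup ι →* G) (k : ℕ) : (triv φ k).Finite := by
  classical
  refine ((List.finite_length_le _ k).preimage FreeGroup.toWord_injective.injOn).subset ?_
  intro w hw
  simpa [wnorm_eq_norm, FreeGroup.norm] using hw.1

lemma mk_take_mul_mk_drop_take {α : Type*} (L : List (α × Bool)) {i j : ℕ} (hij : i ≤ j) :
    FreeGroup.mk (L.take i) * FreeGroup.mk ((L.take j).drop i) = FreeGroup.mk (L.take j) := by
  rw [FreeGroup.mul_mk]
  congr 1
  nth_rw 2 [← List.take_append_drop i (L.take j)]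
  rw [List.take_take, min_eq_left hij]

section Area

variable {R : Set (FreeGroup ι)}

lemma areaLe_single {r : FreeGroup ι} (hr : r ∈ R) : AreaLe R r 1 :=
  ⟨[(1, r)], rfl, by simp [hr], by simp⟩

lemma AreaLe.conj_mul {w : FreeGroup ι} {l : ℕ} (h : AreaLe R w l) {r : FreeGroup ι}
    (hr : r ∈ R) (c : FreeGroup ι) : AreaLe R (c⁻¹ * r * c * w) (l + 1) := by
  obtain ⟨L, rfl, hL, rfl⟩ := h
  refine ⟨(c, r) :: L, rfl, ?_, by simp⟩
  rintro p (_ | ⟨_, hp⟩)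
  exacts [Or.inl hr, hL p hp]

end Area

section MarkedGroup

variable {ψ : FreeGroup ι →* G}

lemma wlen_le_wnorm {w : FreeGroup ι} {g : G} (h : ψ w = g) : wlen ψ g ≤ wnorm w :=
  Nat.sInf_le ⟨w, rfl, h⟩

lemma exists_wnorm_eq_wlen (hs : Surjective ψ) (g : G) : ∃ w, wnorm w = wlen ψ g ∧ ψ w = g := by
  obtain ⟨w, hw⟩ := hs g
  exact Nat.sInf_mem (s := {n | ∃ w, wnorm w = n ∧ ψ w = g}) ⟨wnorm w, w, rfl, hw⟩

lemma wdist_le_wnorm {g h : G} {w : FreeGroup ι} (hw : ψ w = g⁻¹ * h) : wdist ψ g h ≤ wnorm w :=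
  wlen_le_wnorm hw

variable (ψ) in
@[simp] lemma wdist_self (g : G) : wdist ψ g g = 0 :=
  Nat.le_zero.mp (wdist_le_wnorm (w := 1) (by simp))

variable (ψ) in
lemma wlen_inv (g : G) : wlen ψ g⁻¹ = wlen ψ g := by
  unfold wlen
  congr 1
  ext n
  constructor <;> rintro ⟨w, rfl, hw⟩ <;> exact ⟨w⁻¹, wnorm_inv w, by simp [hw]⟩

variable (ψ) in
lemma wdist_comm (g h : G) : wdist ψ g h = wdist ψ h g := by
  rw [wdist, ← wlen_inv, mul_inv_rev, inv_inv, wdist]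

variable (ψ) in
lemma wdist_mul_left (g x y : G) : wdist ψ (g * x) (g * y) = wdist ψ x y := by
  simp only [wdist, mul_inv_rev, mul_assoc, inv_mul_cancel_left]

lemma wdist_triangle (hs : Surjective ψ) (x y z : G) :
    wdist ψ x z ≤ wdist ψ x y + wdist ψ y z := by
  obtain ⟨u, hu, hψu⟩ := exists_wnorm_eq_wlen hs (x⁻¹ * y)
  obtain ⟨v, hv, hψv⟩ := exists_wnorm_eq_wlen hs (y⁻¹ * z)
  calc wdist ψ x z ≤ wnorm (u * v) := wdist_le_wnorm (by simp [hψu, hψv, mul_assoc])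
    _ ≤ wnorm u + wnorm v := wnorm_mul_le u v
    _ = wdist ψ x y + wdist ψ y z := by rw [hu, hv, wdist, wdist]

variable (ψ) in
lemma wdist_mk_take_succ_le (L : List (ι × Bool)) (i : ℕ) :
    wdist ψ (ψ (FreeGroup.mk (L.take i))) (ψ (FreeGroup.mk (L.take (i + 1)))) ≤ 1 := by
  rw [List.take_add_one, ← FreeGroup.mul_mk, map_mul]
  refine (wdist_le_wnorm (w := FreeGroup.mk L[i]?.toList) (by group)).trans
    ((wnorm_mk_le _).trans ?_)
  cases L[i]? <;> simp

lemma wdist_le_of_steps (hs : Surjective ψ) {g : ℕ → G} {N : ℕ}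
    (hstep : ∀ i < N, wdist ψ (g i) (g (i + 1)) ≤ 1) {i j : ℕ} (hij : i ≤ j) (hjN : j ≤ N) :
    wdist ψ (g i) (g j) ≤ j - i := by
  induction j, hij using Nat.le_induction with
  | base => simp
  | succ j hij ih =>
    have := wdist_triangle hs (g i) (g j) (g (j + 1))
    have := hstep j (by omega)
    have := ih (by omega)
    omega

lemma wdist_le_of_fin_steps (hs : Surjective ψ) {n : ℕ} {p : Fin (n + 1) → G}
    (hstep : ∀ i : Fin n, wdist ψ (p i.castSucc) (p i.succ) ≤ 1) {i j : Fin (n + 1)}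
    (hij : i ≤ j) : wdist ψ (p i) (p j) ≤ j - i := by
  let g : ℕ → G := fun t => if h : t < n + 1 then p ⟨t, h⟩ else p 0
  have hg (i : Fin (n + 1)) : g i = p i := dif_pos i.isLt
  have hgstep : ∀ t < n, wdist ψ (g t) (g (t + 1)) ≤ 1 := fun t ht => by
    simpa only [← hg, Fin.val_castSucc, Fin.val_succ] using hstep ⟨t, ht⟩
  simpa [hg] using wdist_le_of_steps hs hgstep hij (Nat.le_of_lt_succ j.isLt)

lemma IsGeodesic.wdist_eq (hs : Surjective ψ) {n : ℕ} {p : Fin (n + 1) → G}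
    (hp : IsGeodesic ψ p) (i : Fin (n + 1)) :
    wdist ψ (p 0) (p i) = i ∧ wdist ψ (p i) (p (Fin.last n)) = n - i := by
  have h₁ := wdist_le_of_fin_steps hs hp.1 (Fin.zero_le i)
  have h₂ := wdist_le_of_fin_steps hs hp.1 (Fin.le_last i)
  have h₃ := wdist_triangle hs (p 0) (p i) (p (Fin.last n))
  simp only [Fin.val_zero, Fin.val_last, hp.2] at h₁ h₂ h₃
  omega

lemma IsGeodesic.comp_rev {n : ℕ} {p : Fin (n + 1) → G} (hp : IsGeodesic ψ p) :
    IsGeodesic ψ (p ∘ Fin.rev) := by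
  refine ⟨fun i => ?_, ?_⟩
  · simpa only [comp_apply, Fin.rev_castSucc, Fin.rev_succ, wdist_comm] using hp.1 i.rev
  · simpa only [comp_apply, Fin.rev_zero, Fin.rev_last, wdist_comm] using hp.2

lemma IsGeodesic.wdist_add_wdist_le (hs : Surjective ψ) {n : ℕ} {p : Fin (n + 1) → G}
    (hp : IsGeodesic ψ p) {a : G} (ha : a ∈ Set.range p) (x : G) :
    wdist ψ (p 0) x + wdist ψ x (p (Fin.last n)) ≤ n + 2 * wdist ψ x a := by
  obtain ⟨i, rfl⟩ := ha
  obtain ⟨h₁, h₂⟩ := hp.wdist_eq hs i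
  have := wdist_triangle hs (p 0) (p i) x
  have := wdist_triangle hs x (p i) (p (Fin.last n))
  have := wdist_comm ψ x (p i)
  have := i.is_le
  omega

lemma exists_isGeodesic (hs : Surjective ψ) (g h : G) :
    ∃ p : Fin (wdist ψ g h + 1) → G, IsGeodesic ψ p ∧ p 0 = g ∧ p (Fin.last _) = h := by
  classical
  obtain ⟨v, hv, hψv⟩ := exists_wnorm_eq_wlen hs (g⁻¹ * h)
  have hlen : (FreeGroup.toWord v).length = wdist ψ g h := by
    rw [← FreeGroup.norm, ← wnorm_eq_norm, hv, wdist]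
  let p : Fin (wdist ψ g h + 1) → G := fun i =>
    g * ψ (FreeGroup.mk ((FreeGroup.toWord v).take i))
  have hp0 : p 0 = g := by simp [p, ← FreeGroup.one_eq_mk]
  have hpl : p (Fin.last _) = h := by simp [p, ← hlen, FreeGroup.mk_toWord, hψv]
  refine ⟨p, ⟨fun i => ?_, by rw [hp0, hpl]⟩, hp0, hpl⟩
  simpa only [p, Fin.val_castSucc, Fin.val_succ, wdist_mul_left] using
    wdist_mk_take_succ_le ψ (FreeGroup.toWord v) i

lemma ThinAt.mono {δ δ' : ℝ} {n : ℕ} {p : Fin (n + 1) → G} {A : Set G}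
    (h : ThinAt ψ δ p A) (hδ : δ ≤ δ') : ThinAt ψ δ' p A :=
  fun i => (h i).imp fun _ ha => ⟨ha.1, ha.2.trans hδ⟩

lemma HypConst.mono {δ δ' : ℝ} (h : HypConst ψ δ) (hδ : δ ≤ δ') : HypConst ψ δ' := by
  intro n₁ n₂ n₃ p q r hp hq hr h₁ h₂ h₃
  obtain ⟨hp', hq', hr'⟩ := h n₁ n₂ n₃ p q r hp hq hr h₁ h₂ h₃
  exact ⟨hp'.mono hδ, hq'.mono hδ, hr'.mono hδ⟩

variable {δ : ℕ}

/-- Thinness of the triangle with vertices `σ 0`, `σ (Fin.last n)` and `x`. -/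
lemma HypConst.wdist_add_wdist_le_or (hyp : HypConst ψ δ) (hs : Surjective ψ) {n : ℕ}
    {σ : Fin (n + 1) → G} (hσ : IsGeodesic ψ σ) (x : G) (i : Fin (n + 1)) :
    wdist ψ (σ 0) (σ i) + wdist ψ (σ i) x ≤ wdist ψ (σ 0) x + 2 * δ ∨
      wdist ψ x (σ i) + wdist ψ (σ i) (σ (Fin.last n)) ≤ wdist ψ x (σ (Fin.last n)) + 2 * δ := by
  obtain ⟨p, hp, hp0, hpl⟩ := exists_isGeodesic hs (σ 0) x
  obtain ⟨q, hq, hq0, hql⟩ := exists_isGeodesic hs x (σ (Fin.last n))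
  obtain ⟨-, -, hthin⟩ := hyp _ _ _ p q (σ ∘ Fin.rev) hp hq hσ.comp_rev
    (hpl.trans hq0.symm) (by simp [hql]) (by simp [hp0])
  obtain ⟨a, ha, hda⟩ := hthin i.rev
  simp only [comp_apply, Fin.rev_rev] at hda
  have hda : wdist ψ (σ i) a ≤ δ := by exact_mod_cast hda
  rcases ha with ha | ha
  · have := hp.wdist_add_wdist_le hs ha (σ i)
    rw [hp0, hpl] at this
    omega
  · have := hq.wdist_add_wdist_le hs ha (σ i)
    rw [hq0, hql] at this
    omega

lemma HypConst.exists_wdist_le_of_taut (hyp : HypConst ψ δ) (hs : Surjective ψ) {n s : ℕ}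
    {σ : Fin (n + 1) → G} (hσ : IsGeodesic ψ σ) {x : G}
    (htaut : wdist ψ (σ 0) x + wdist ψ x (σ (Fin.last n)) ≤ n + s) :
    ∃ i, wdist ψ x (σ i) ≤ s + 2 * δ := by
  by_cases hlt : n < wdist ψ (σ 0) x
  · exact ⟨Fin.last n, by omega⟩
  obtain ⟨i, hi⟩ : ∃ i : Fin (n + 1), (i : ℕ) = wdist ψ (σ 0) x :=
    ⟨⟨wdist ψ (σ 0) x, by omega⟩, rfl⟩
  obtain ⟨h₁, h₂⟩ := hσ.wdist_eq hs i
  refine ⟨i, ?_⟩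
  have := wdist_comm ψ x (σ i)
  rcases hyp.wdist_add_wdist_le_or hs hσ x i with h | h <;> omega

lemma HypConst.wdist_le_or_wdist_le_of_farthest (hyp : HypConst ψ δ) (hs : Surjective ψ)
    {o x y z : G} {s : ℕ} (hy : wdist ψ o y ≤ wdist ψ o x) (hz : wdist ψ o z ≤ wdist ψ o x)
    (htaut : wdist ψ y x + wdist ψ x z ≤ wdist ψ y z + s) :
    wdist ψ y x ≤ 2 * s + 6 * δ ∨ wdist ψ x z ≤ 2 * s + 6 * δ := by
  obtain ⟨σ, hσ, hσ0, hσl⟩ := exists_isGeodesic hs y z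
  obtain ⟨i, hi⟩ := hyp.exists_wdist_le_of_taut hs hσ (x := x) (s := s) (by rwa [hσ0, hσl])
  have := wdist_comm ψ x (σ i)
  have := wdist_comm ψ o x
  have := wdist_comm ψ o (σ i)
  have := wdist_triangle hs o (σ i) x
  rcases hyp.wdist_add_wdist_le_or hs hσ o i with h | h
  · have := wdist_comm ψ o y
    have := wdist_triangle hs y (σ i) x
    rw [hσ0] at h
    omega
  · have := wdist_triangle hs x (σ i) z
    rw [hσl] at h
    omega

lemma HypConst.exists_shortcut (hyp : HypConst ψ δ) (hs : Surjective ψ) {s q N : ℕ}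
    (hq : 4 * s + 6 * δ + 1 ≤ q) (hN : q ≤ N) {g : ℕ → G} (hloop : g N = g 0)
    (hstep : ∀ i < N, wdist ψ (g i) (g (i + 1)) ≤ 1) :
    ∃ i j, i ≤ j ∧ j ≤ N ∧ j - i ≤ 2 * q ∧ wdist ψ (g i) (g j) + s + 1 ≤ j - i := by
  by_contra! htaut
  replace htaut : ∀ i j, i ≤ j → j ≤ N → j - i ≤ 2 * q → j - i ≤ wdist ψ (g i) (g j) + s :=
    fun i j h₁ h₂ h₃ => by have := htaut i j h₁ h₂ h₃; omega
  have hchain {i j : ℕ} (hij : i ≤ j) (hj : j ≤ N) := wdist_le_of_steps hs hstep hij hj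
  obtain ⟨t, ht, hmax⟩ := Finset.exists_max_image (Finset.range (N + 1))
    (fun i => wdist ψ (g 0) (g i)) ⟨0, by simp⟩
  simp only [Finset.mem_range] at ht hmax
  have hfar := hyp.wdist_le_or_wdist_le_of_farthest hs (s := s)
    (hmax (t - q) (by omega)) (hmax (min (t + q) N) (by omega)) (by
      have := hchain (Nat.sub_le t q) (by omega)
      have := hchain (le_min (Nat.le_add_right t q) (by omega)) (min_le_right _ N)
      have := htaut (t - q) (min (t + q) N) (by omega) (min_le_right _ N) (by omega)
      omega)
  have := hchain (Nat.zero_le t) (by omega)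
  have : wdist ψ (g 0) (g t) ≤ N - t := by
    rw [← hloop, wdist_comm]
    exact hchain (by omega) le_rfl
  have := htaut (t - q) t (Nat.sub_le t q) (by omega) (by omega)
  have := htaut t (min (t + q) N) (by omega) (min_le_right _ N) (by omega)
  have := htaut 0 q (Nat.zero_le q) hN (by omega)
  have := hmax q (by omega)
  omega

/-- The relator is `u v⁻¹`, where `u` is the window given by `exists_shortcut` and `v` a
geodesic word with the same endpoints. -/
lemma HypConst.exists_relator_shortening (hyp : HypConst ψ δ) (hs : Surjective ψ) {s q : ℕ}
    (hq : 4 * s + 6 * δ + 1 ≤ q) {w : FreeGroup ι} (hw : ψ w = 1) (hqw : q ≤ wnorm w) :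
    ∃ r c w', wnorm r ≤ 4 * q ∧ ψ r = 1 ∧ w = c⁻¹ * r * c * w' ∧ ψ w' = 1 ∧
      wnorm w' + (s + 1) ≤ wnorm w := by
  classical
  set L := FreeGroup.toWord w
  have hlen : wnorm w = L.length := wnorm_eq_norm w
  let g : ℕ → G := fun i => ψ (FreeGroup.mk (L.take i))
  have hloop : g L.length = g 0 := by
    simp [g, L, FreeGroup.mk_toWord, hw, ← FreeGroup.one_eq_mk]
  obtain ⟨i, j, hij, hjN, hwin, hshort⟩ := hyp.exists_shortcut hs hq (hlen ▸ hqw) hloop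
    (fun i _ => wdist_mk_take_succ_le ψ L i)
  obtain ⟨v, hv, hψv⟩ := exists_wnorm_eq_wlen hs ((g i)⁻¹ * g j)
  set a := FreeGroup.mk (L.take i)
  set u := FreeGroup.mk ((L.take j).drop i)
  set b := FreeGroup.mk (L.drop j)
  have hau : a * u = FreeGroup.mk (L.take j) := mk_take_mul_mk_drop_take L hij
  have hw_eq : w = a * u * b := by
    rw [hau, FreeGroup.mul_mk, List.take_append_drop, FreeGroup.mk_toWord]
  have hψu : ψ u = ψ v := by
    rw [hψv]
    show ψ u = (ψ a)⁻¹ * ψ (FreeGroup.mk (L.take j))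
    rw [← hau, map_mul, inv_mul_cancel_left]
  have ha : wnorm a ≤ i := (wnorm_mk_le _).trans (List.length_take_le _ _)
  have hu : wnorm u ≤ j - i := (wnorm_mk_le _).trans (by simp; omega)
  have hb : wnorm b ≤ L.length - j := (wnorm_mk_le _).trans (by simp)
  have hv' : wnorm v + (s + 1) ≤ j - i := by rw [hv]; exact hshort
  refine ⟨u * v⁻¹, a⁻¹, a * v * b, ?_, by simp [hψu], by rw [hw_eq]; group, ?_, ?_⟩
  · have := wnorm_mul_le u v⁻¹
    rw [wnorm_inv] at this
    omega
  · rwa [map_mul, map_mul, ← hψu, ← map_mul, ← map_mul, ← hw_eq]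
  · have := wnorm_mul_le (a * v) b
    have := wnorm_mul_le a v
    omega

lemma HypConst.exists_areaLe (hyp : HypConst ψ δ) (hs : Surjective ψ) {s q : ℕ}
    (hq : 4 * s + 6 * δ + 1 ≤ q) {S : Set (FreeGroup ι)}
    (hS : ∀ r, wnorm r ≤ 4 * q → ψ r = 1 → r ∈ S) (n : ℕ) :
    ∀ w, wnorm w ≤ n → ψ w = 1 → ∃ l ≤ n / (s + 1) + 1, AreaLe S w l := by
  induction n using Nat.strong_induction_on with
  | _ n ih =>
  intro w hwn hw
  by_cases hshort : wnorm w < q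
  · exact ⟨1, Nat.le_add_left 1 _, areaLe_single (hS w (by omega) hw)⟩
  obtain ⟨r, c, w', hr, hψr, rfl, hψw', hw'⟩ :=
    hyp.exists_relator_shortening hs hq hw (not_lt.mp hshort)
  obtain ⟨l, hl, harea⟩ := ih (n - (s + 1)) (by omega) w' (by omega) hψw'
  refine ⟨l + 1, ?_, harea.conj_mul (hS r hr hψr) c⟩
  have : n / (s + 1) = (n - (s + 1)) / (s + 1) + 1 := by
    rw [← Nat.add_div_right _ s.succ_pos, Nat.sub_add_cancel (by omega)]
  omega

end MarkedGroup

lemma isoSpec_le_of_forall_areaLe {φ : FreeGroup ι →* G} {k m n b : ℕ}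
    (h : ∀ w ∈ Subgroup.normalClosure (triv φ k), wnorm w ≤ n → ∃ l ≤ b, AreaLe (triv φ m) w l) :
    isoSpec φ k m n ≤ b := by
  refine csSup_le ⟨_, 1, ⟨one_mem _, by simp⟩, rfl⟩ ?_
  rintro _ ⟨w, ⟨hw, hwn⟩, rfl⟩
  obtain ⟨l, hl, harea⟩ := h w hw hwn
  exact (Nat.sInf_le harea).trans hl

lemma isoSpecR_le_of_hypConst (φ : FreeGroup ι →* G) {N : Subgroup (FreeGroup ι)} [N.Normal]
    {δ k m : ℕ} (hyp : HypConst (QuotientGroup.mk' N) δ) (hNφ : N ≤ φ.ker)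
    (hk : triv φ k ⊆ N) (hm : 48 * δ + 200 ≤ m) (n : ℕ) :
    isoSpecR φ k m n ≤ 32 * (n / m : ℝ) + 1 := by
  have hmemN (w : FreeGroup ι) : QuotientGroup.mk' N w = 1 ↔ w ∈ N := by
    rw [← MonoidHom.mem_ker, QuotientGroup.ker_mk']
  -- Dehn's algorithm with `s = m / 32` and `q = m / 4`, so that the relators lie in `triv φ m`.
  have hS : ∀ r, wnorm r ≤ 4 * (m / 4) → QuotientGroup.mk' N r = 1 → r ∈ triv φ m :=
    fun r hr h => ⟨by omega, hNφ ((hmemN r).mp h)⟩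
  have hnat : isoSpec φ k m n ≤ n / (m / 32 + 1) + 1 :=
    isoSpec_le_of_forall_areaLe fun w hw hwn =>
      hyp.exists_areaLe (QuotientGroup.mk'_surjective N) (by omega) hS n w hwn
        ((hmemN w).mpr (Subgroup.normalClosure_le_normal hk hw))
  have hm32 : (m : ℝ) ≤ 32 * ((m / 32 : ℕ) + 1 : ℝ) := by exact_mod_cast (by omega)
  have hm0 : (0 : ℝ) < m := by exact_mod_cast (by omega)
  calc isoSpecR φ k m n ≤ ((n / (m / 32 + 1) : ℕ) : ℝ) + 1 := by
        unfold isoSpecR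
        exact_mod_cast hnat
    _ ≤ n / ((m / 32 : ℕ) + 1 : ℝ) + 1 := by
      gcongr
      exact_mod_cast Nat.cast_div_le
    _ ≤ 32 * (n / m : ℝ) + 1 := by
      gcongr ?_ + 1
      rw [mul_div_assoc', div_le_div_iff₀ (by positivity) hm0]
      nlinarith

lemma specLE_linSpec_of_le {f : ℕ → ℕ → ℕ → ℝ} {c A B : ℕ}
    (hf : ∀ k m n, 0 < k → c * k ≤ m → f k m n ≤ A * (n / m : ℝ) + B) : SpecLE f linSpec := by
  refine ⟨c + A + B + 1, by omega, fun k m n hk hm _ hkm => ?_⟩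
  set C := c + A + B + 1
  have hC : (1 : ℝ) ≤ C := by exact_mod_cast (by omega)
  have hCm : c * k ≤ C * m :=
    Nat.mul_le_mul (by omega) ((Nat.le_mul_of_pos_left k (by omega)).trans hkm)
  have hA : (A : ℝ) ≤ C := by exact_mod_cast (by omega)
  have hB : (B : ℝ) ≤ C := by exact_mod_cast (by omega)
  have hdiv : (n / (C * m : ℕ) : ℝ) ≤ n / m := by
    push_cast
    exact div_le_div_of_nonneg_left (Nat.cast_nonneg n) (by positivity)
      (le_mul_of_one_le_left (Nat.cast_nonneg m) hC)
  calc f k (C * m) n ≤ A * (n / (C * m : ℕ) : ℝ) + B := hf k (C * m) n hk hCm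
    _ ≤ C * (n / m : ℝ) + C := add_le_add (mul_le_mul hA hdiv (by positivity) (by positivity)) hB
    _ ≤ C * linSpec (C * k) m (C * n) + C * (n : ℝ) / m + C := by
      have : 0 ≤ C * linSpec (C * k) m (C * n) := by unfold linSpec; positivity
      rw [mul_div_assoc]
      linarith

lemma linSpec_specLE {f : ℕ → ℕ → ℕ → ℝ} (hf : ∀ k m n, 0 ≤ f k m n) : SpecLE linSpec f :=
  ⟨1, one_pos, fun k m n _ _ _ _ => by
    simp only [linSpec, Nat.cast_one, one_mul]
    linarith [hf k m n]⟩

lemma mul_add_le_mul_ceil {x a b : ℝ} (hx : 0 < x) (ha : 0 ≤ a) (hb : 0 ≤ b) :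
    a * x + b ≤ (a + b) * ⌈x⌉₊ := by
  have h₁ : x ≤ ⌈x⌉₊ := Nat.le_ceil x
  have h₂ : (1 : ℝ) ≤ ⌈x⌉₊ := by exact_mod_cast Nat.one_le_iff_ne_zero.mpr (by positivity)
  nlinarith

lemma exists_subset_normalClosure_of_finite {F : Type*} [Group F] {R : ℕ → Set F}
    (hR : Monotone R) {T : Set F} (hT : T.Finite)
    (hTR : T ⊆ Subgroup.normalClosure (⋃ i, R i)) : ∃ i, T ⊆ Subgroup.normalClosure (R i) := by
  have hdir : Directed (· ≤ ·) fun i => Subgroup.normalClosure (R i) :=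
    Monotone.directed_le fun _ _ hij => Subgroup.normalClosure_mono (hR hij)
  have hle : Subgroup.normalClosure (⋃ i, R i) ≤ ⨆ i, Subgroup.normalClosure (R i) :=
    Subgroup.normalClosure_le_normal <| Set.iUnion_subset fun i =>
      Subgroup.subset_normalClosure.trans (le_iSup (fun i => Subgroup.normalClosure (R i)) i)
  have hTU : (hT.toFinset : Set F) ⊆ ⋃ i, (Subgroup.normalClosure (R i) : Set F) := by
    rw [hT.coe_toFinset, ← Subgroup.coe_iSup_of_directed hdir]
    exact hTR.trans hle
  simpa using hdir.mono_comp _ (fun _ _ h => h) |>.exists_mem_subset_of_finset_subset_biUnion hTU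

lemma normalClosure_le_ker {φ : FreeGroup ι →* G} {R : ℕ → Set (FreeGroup ι)}
    (hker : φ.ker = Subgroup.normalClosure (⋃ i, R i)) (i : ℕ) :
    Subgroup.normalClosure (R i) ≤ φ.ker :=
  hker ▸ Subgroup.normalClosure_mono (Set.subset_iUnion R i)

lemma LimitOfHyperbolic.exists_hypConst [Finite ι] {φ : FreeGroup ι →* G}
    (h : LimitOfHyperbolic φ) (k : ℕ) :
    ∃ R : Set (FreeGroup ι), Subgroup.normalClosure R ≤ φ.ker ∧
      triv φ k ⊆ Subgroup.normalClosure R ∧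
      ∃ δ : ℕ, HypConst (QuotientGroup.mk' (Subgroup.normalClosure R)) δ := by
  obtain ⟨-, R, hR, hker, hhyp⟩ := h
  obtain ⟨i, hi⟩ := exists_subset_normalClosure_of_finite hR (triv_finite φ k)
    fun w hw => hker ▸ hw.2
  obtain ⟨δ, -, hδ⟩ := hhyp i
  exact ⟨R i, normalClosure_le_ker hker i, hi, ⌈δ⌉₊, hδ.mono (Nat.le_ceil δ)⟩

lemma WellApproximated.specLE_linSpec {φ : FreeGroup ι →* G} (h : WellApproximated φ) :
    SpecLE (isoSpecR φ) linSpec := by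
  obtain ⟨-, R, -, hker, -, C, -, hC⟩ := h
  refine specLE_linSpec_of_le (c := 48 * C + 200) (A := 32) (B := 1) fun k m n hk hkm => ?_
  obtain ⟨htriv, hyp⟩ := hC k hk
  exact_mod_cast isoSpecR_le_of_hypConst φ hyp (normalClosure_le_ker hker k)
    (fun w hw => htriv w hw.1 hw.2) (by nlinarith) n

/-- If `G` is a limit of hyperbolic groups, then (a) for every `k`
there is `M(k)` with `f_{G,X}(k,m,n) ≤ 400⌈n/m⌉` for all `m ≥ M`; and (b) if `G` is
well-approximated by hyperbolic groups then `f_{G,X}(k,m,n) ∼ n/m`. -/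
theorem isoSpec_of_limitOfHyperbolic {G : Type} [Group G] {a : ℕ}
    (φ : FreeGroup (Fin a) →* G) (hlim : LimitOfHyperbolic φ) :
    (∀ k : ℕ, 0 < k → ∃ M : ℕ, ∀ m n : ℕ, M ≤ m → 0 < n →
      isoSpecR φ k m n ≤ 400 * (⌈(n : ℝ) / (m : ℝ)⌉₊ : ℝ)) ∧
    (WellApproximated φ → SpecEquiv (isoSpecR φ) linSpec) := by
  refine ⟨fun k _ => ?_, fun hwa => ⟨hwa.specLE_linSpec, linSpec_specLE fun _ _ _ => by
    unfold isoSpecR; positivity⟩⟩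
  obtain ⟨R, hRφ, hk, δ, hyp⟩ := hlim.exists_hypConst k
  refine ⟨48 * δ + 200, fun m n hm hn => ?_⟩
  have hnm : (0 : ℝ) < n / m := by
    have : 0 < m := by omega
    positivity
  calc isoSpecR φ k m n ≤ 32 * (n / m : ℝ) + 1 := isoSpecR_le_of_hypConst φ hyp hRφ hk hm n
    _ ≤ (32 + 1) * ⌈(n : ℝ) / m⌉₊ := mul_add_le_mul_ceil hnm (by norm_num) (by norm_num)
    _ ≤ 400 * ⌈(n : ℝ) / m⌉₊ := by gcongr; norm_num

end IsoSpecPaper
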